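/- In the power allocation game with α_i > 0 and λ_i ≥ 0 for all i, define the M×M matrix Q by Q_{p,p} = α_p·W and, for p ≠ q, Q_{p,q} = −α_p·W·(a_{p,q}/a_{q,q})·(1 + σ^{−2}·∑_{i=1}^M a_{q,i}·p_i^max). If Q is a P-matrix, then the game admits exactly one Nash equilibrium: there is a unique profile p* ∈ P such that for every i ∈ {1,…,M} and every q ∈ [0, p_i^max], replacing the i-th coordinate of p* by q does not increase φ_i. -/

import Mathlib

open Finset

/-- Equivalent channel gain of player `i` under power profile `p`:
`g_i(p) = a_{i,i} / (∑_{ℓ ≠ i} a_{i,ℓ}·p_ℓ + σ²)`. -/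
noncomputable def gain (M : ℕ) (σ2 : ℝ) (a : Fin M → Fin M → ℝ)
    (p : Fin M → ℝ) (i : Fin M) : ℝ :=
  a i i / ((∑ ℓ ∈ Finset.univ.erase i, a i ℓ * p ℓ) + σ2)

/-- Payoff of player `i`: `φ_i(p) = α_i·W·log(1 + g_i(p)·p_i) − λ_i·p_i`. -/
noncomputable def payoff (M : ℕ) (W σ2 : ℝ) (α lam : Fin M → ℝ)
    (a : Fin M → Fin M → ℝ) (p : Fin M → ℝ) (i : Fin M) : ℝ :=
  α i * W * Real.log (1 + gain M σ2 a p i * p i) - lam i * p i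

/-- The joint strategy set `P = ∏_{i=1}^M [0, p_i^max]`. -/
def stratBox (M : ℕ) (pmax : Fin M → ℝ) : Set (Fin M → ℝ) :=
  {p | ∀ i, p i ∈ Set.Icc (0 : ℝ) (pmax i)}

/-- `p` is a Nash equilibrium: no player can improve its payoff by unilaterally
changing its own power within `[0, p_i^max]`. -/
def IsNE (M : ℕ) (W σ2 : ℝ) (α lam pmax : Fin M → ℝ)
    (a : Fin M → Fin M → ℝ) (p : Fin M → ℝ) : Prop :=
  ∀ i, ∀ q ∈ Set.Icc (0 : ℝ) (pmax i),
    payoff M W σ2 α lam a (Function.update p i q) i ≤ payoff M W σ2 α lam a p i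


/-- The matrix `Q` of Theorem 1: `Q_{p,p} = α_p·W` and, for `p ≠ q`,
`Q_{p,q} = −α_p·W·(a_{p,q}/a_{q,q})·(1 + σ⁻²·∑_i a_{q,i}·p_i^max)`. -/
noncomputable def Qmat (M : ℕ) (W σ2 : ℝ) (α pmax : Fin M → ℝ)
    (a : Fin M → Fin M → ℝ) : Matrix (Fin M) (Fin M) ℝ :=
  fun p q =>
    if p = q then α p * W
    else -(α p * W * (a p q / a q q) * (1 + σ2⁻¹ * ∑ i, a q i * pmax i))

/-- A real square matrix is a P-matrix if every principal minor is positive. -/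
def IsPMatrix {n : ℕ} (A : Matrix (Fin n) (Fin n) ℝ) : Prop :=
  ∀ S : Finset (Fin n), S.Nonempty →
    0 < (A.submatrix (fun i : S => (i : Fin n)) (fun j : S => (j : Fin n))).det

/-!
Each payoff is strictly concave in the player's own power, so the best response to `p` is the
clamped water-filling level `min p_i^max (max 0 (α_i W / λ_i - 1 / g_i(p)))` (or `p_i^max` when
`λ_i = 0`), and the Nash equilibria are exactly the fixed points of the best-response map `T`.
Since `T` is antitone, `T ∘ T` is monotone on the box and has a fixed point by Knaster–Tarski.

Moreover `a_ii |T p - T p'|_i ≤ ∑_{ℓ ≠ i} a_iℓ |p - p'|_ℓ`, and the P-matrix hypothesis forces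
every `d ≥ 0` with `a_ii d_i ≤ ∑_{ℓ ≠ i} a_iℓ d_ℓ` to vanish: rescaled by
`a_qq / (1 + σ⁻² ∑_i a_qi p_i^max)` such a `d` satisfies `Q d ≤ 0`, and a P-matrix with
nonpositive off-diagonal entries admits no nonzero `x ≥ 0` with `Q x ≤ 0` (induction on the size
through the Schur complement of the `(0, 0)` entry). Applied to `d = |p - p'|`, this shows that a
2-cycle of `T` is a fixed point and that `T` has at most one fixed point.
-/

open Matrix Function

def IsZMatrix {ι : Type*} (A : Matrix ι ι ℝ) : Prop :=
  ∀ i j, i ≠ j → A i j ≤ 0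

namespace Matrix

variable {K : Type*} [Field K] {n : ℕ}

def schurZero (A : Matrix (Fin (n + 1)) (Fin (n + 1)) K) : Matrix (Fin n) (Fin n) K :=
  of fun i j => A i.succ j.succ - A i.succ 0 * A 0 j.succ / A 0 0

theorem det_eq_mul_det_schurZero (A : Matrix (Fin (n + 1)) (Fin (n + 1)) K) (h : A 0 0 ≠ 0) :
    A.det = A 0 0 * (schurZero A).det := by
  let c : Fin (n + 1) → K := Fin.cons 0 fun i => -(A i.succ 0 / A 0 0)
  let B : Matrix (Fin (n + 1)) (Fin (n + 1)) K := of fun i j => A i j + c i * A 0 j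
  have hB : B.det = A.det :=
    det_eq_of_forall_row_eq_smul_add_const c 0 rfl fun _ _ => rfl
  have hB0 : ∀ i : Fin n, B i.succ 0 = 0 := fun i => by
    simp only [of_apply, Fin.cons_succ, B, c]
    field_simp
    ring
  rw [← hB, det_succ_column_zero, Fin.sum_univ_succ]
  simp only [hB0, mul_zero, zero_mul, sum_const_zero, add_zero]
  congr 2
  · simp [B, c]
  · ext i j
    simp only [Fin.succAbove_zero, submatrix_apply, of_apply, Fin.cons_succ, schurZero, B, c]
    ring

theorem schurZero_mulVec (A : Matrix (Fin (n + 1)) (Fin (n + 1)) K) (h : A 0 0 ≠ 0)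
    (x : Fin (n + 1) → K) (i : Fin n) :
    (schurZero A *ᵥ (x ∘ Fin.succ)) i = (A *ᵥ x) i.succ - A i.succ 0 / A 0 0 * (A *ᵥ x) 0 := by
  simp only [mulVec, dotProduct, Fin.sum_univ_succ, schurZero, of_apply, Function.comp_apply,
    sub_mul, sum_sub_distrib]
  have hsum : ∑ j : Fin n, A i.succ 0 * A 0 j.succ / A 0 0 * x j.succ =
      A i.succ 0 / A 0 0 * ∑ j : Fin n, A 0 j.succ * x j.succ := by
    rw [mul_sum]
    exact sum_congr rfl fun j _ => by ring
  rw [hsum]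
  field_simp
  ring

end Matrix

theorem isPMatrix_iff_forall_det_submatrix_pos {n : ℕ} {A : Matrix (Fin n) (Fin n) ℝ} :
    IsPMatrix A ↔ ∀ m (f : Fin m → Fin n), Injective f → 0 < (A.submatrix f f).det := by
  constructor
  · intro hA m f hf
    rcases Nat.eq_zero_or_pos m with rfl | hm
    · simp
    let S : Finset (Fin n) := univ.map ⟨f, hf⟩
    let e : Fin m ≃ S := Equiv.ofBijective (fun i => ⟨f i, by simp [S]⟩)
      ⟨fun i j h => hf (congrArg Subtype.val h), fun ⟨x, hx⟩ => by
        obtain ⟨i, -, rfl⟩ := mem_map.1 hx; exact ⟨i, rfl⟩⟩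
    have : A.submatrix f f =
        (A.submatrix (fun i : S => (i : Fin n)) (fun j : S => (j : Fin n))).submatrix e e := rfl
    rw [this, det_submatrix_equiv_self]
    exact hA S ⟨f ⟨0, hm⟩, by simp [S]⟩
  · intro hA S _
    let e := S.equivFin
    rw [← det_submatrix_equiv_self e.symm]
    exact hA _ _ (Subtype.val_injective.comp e.symm.injective)

theorem IsPMatrix.diag_pos {n : ℕ} {A : Matrix (Fin n) (Fin n) ℝ} (hA : IsPMatrix A)
    (i : Fin n) : 0 < A i i := by
  have h := isPMatrix_iff_forall_det_submatrix_pos.1 hA 1 ![i] (injective_of_subsingleton _)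
  rwa [det_fin_one, submatrix_apply, cons_val_zero] at h

theorem IsPMatrix.schurZero {n : ℕ} {A : Matrix (Fin (n + 1)) (Fin (n + 1)) ℝ}
    (hA : IsPMatrix A) : IsPMatrix A.schurZero := by
  refine isPMatrix_iff_forall_det_submatrix_pos.2 fun m f hf => ?_
  let g : Fin (m + 1) → Fin (n + 1) := Fin.cons 0 (Fin.succ ∘ f)
  have hg : Injective g :=
    Fin.cons_injective_iff.2 ⟨by simp [Fin.succ_ne_zero], (Fin.succ_injective _).comp hf⟩
  have hdet := isPMatrix_iff_forall_det_submatrix_pos.1 hA _ _ hg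
  rw [det_eq_mul_det_schurZero (A.submatrix g g) (hA.diag_pos 0).ne'] at hdet
  exact pos_of_mul_pos_right hdet (hA.diag_pos 0).le

theorem IsZMatrix.schurZero {n : ℕ} {A : Matrix (Fin (n + 1)) (Fin (n + 1)) ℝ}
    (hA : IsZMatrix A) (h0 : 0 < A 0 0) : IsZMatrix A.schurZero := by
  intro i j hij
  have hi := hA i.succ 0 (Fin.succ_ne_zero i)
  have hj := hA 0 j.succ (Fin.succ_ne_zero j).symm
  have hij' := hA i.succ j.succ (Fin.succ_injective _ |>.ne hij)
  have : 0 ≤ A i.succ 0 * A 0 j.succ / A 0 0 :=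
    div_nonneg (mul_nonneg_of_nonpos_of_nonpos hi hj) h0.le
  simp only [Matrix.schurZero, of_apply]
  linarith

theorem IsPMatrix.eq_zero_of_mulVec_nonpos {n : ℕ} {A : Matrix (Fin n) (Fin n) ℝ}
    (hP : IsPMatrix A) (hZ : IsZMatrix A) {x : Fin n → ℝ} (hx : 0 ≤ x) (hAx : A *ᵥ x ≤ 0) :
    x = 0 := by
  induction n with
  | zero => exact Subsingleton.elim _ _
  | succ n ih =>
    have h0 := hP.diag_pos 0
    have htail : x ∘ Fin.succ = 0 := by
      refine ih hP.schurZero (hZ.schurZero h0) (fun i => hx i.succ) fun i => ?_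
      have hc : A i.succ 0 / A 0 0 ≤ 0 :=
        div_nonpos_of_nonpos_of_nonneg (hZ _ _ (Fin.succ_ne_zero i)) h0.le
      have := mul_nonneg_of_nonpos_of_nonpos hc (hAx 0)
      rw [schurZero_mulVec _ h0.ne', Pi.zero_apply]
      have hi : (A *ᵥ x) i.succ ≤ 0 := hAx i.succ
      linarith
    have hxs : ∀ i : Fin n, x i.succ = 0 := fun i => congrFun htail i
    have hhead : (A *ᵥ x) 0 = A 0 0 * x 0 := by
      simp [mulVec, dotProduct, Fin.sum_univ_succ, hxs]
    have hx0 : x 0 = 0 := le_antisymm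
      (nonpos_of_mul_nonpos_right (hhead ▸ hAx 0) h0) (hx 0)
    funext i
    cases i using Fin.cases with
    | zero => exact hx0
    | succ i => exact congrFun htail i

theorem MonotoneOn.exists_isFixedPt_of_mapsTo_Icc {α : Type*} [ConditionallyCompleteLattice α]
    {f : α → α} {a b : α} (hab : a ≤ b) (hf : MonotoneOn f (Set.Icc a b))
    (hmaps : Set.MapsTo f (Set.Icc a b) (Set.Icc a b)) : ∃ x ∈ Set.Icc a b, IsFixedPt f x := by
  have : Fact (a ≤ b) := ⟨hab⟩
  let g : Set.Icc a b →o Set.Icc a b :=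
    ⟨fun x => ⟨f x, hmaps x.2⟩, fun x y hxy => hf x.2 y.2 hxy⟩
  exact ⟨g.lfp, g.lfp.2, congrArg Subtype.val g.map_lfp⟩

theorem sub_mul_sub_min_max_nonpos {m q t : ℝ} (hq : q ∈ Set.Icc 0 m) :
    (q - min m (max 0 t)) * (t - min m (max 0 t)) ≤ 0 := by
  obtain ⟨hq0, hqm⟩ := hq
  rcases le_total t 0 with ht | ht
  · rw [max_eq_left ht, min_eq_right (hq0.trans hqm)]
    nlinarith
  rcases le_total t m with htm | htm
  · rw [max_eq_right ht, min_eq_right htm]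
    simp
  · rw [max_eq_right ht, min_eq_left htm]
    nlinarith

noncomputable def playerUtility (c lam g q : ℝ) : ℝ :=
  c * Real.log (1 + g * q) - lam * q

noncomputable def bestResponse (c lam m g : ℝ) : ℝ :=
  if lam = 0 then m else min m (max 0 (c / lam - g⁻¹))

theorem bestResponse_mem_Icc {c lam m : ℝ} (g : ℝ) (hm : 0 ≤ m) :
    bestResponse c lam m g ∈ Set.Icc 0 m := by
  unfold bestResponse
  split_ifs
  · exact ⟨hm, le_rfl⟩
  · exact ⟨le_min hm (le_max_left _ _), min_le_left _ _⟩

theorem bestResponse_le_bestResponse {c lam m g g' : ℝ} (h : g⁻¹ ≤ g'⁻¹) :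
    bestResponse c lam m g' ≤ bestResponse c lam m g := by
  unfold bestResponse
  split_ifs
  · exact le_rfl
  · gcongr

theorem abs_bestResponse_sub_le (c lam m g g' : ℝ) :
    |bestResponse c lam m g - bestResponse c lam m g'| ≤ |g⁻¹ - g'⁻¹| := by
  unfold bestResponse
  split_ifs
  · simp
  · calc |min m (max 0 (c / lam - g⁻¹)) - min m (max 0 (c / lam - g'⁻¹))|
        ≤ max |m - m| |max 0 (c / lam - g⁻¹) - max 0 (c / lam - g'⁻¹)| :=
          abs_min_sub_min_le_max _ _ _ _
      _ ≤ |(c / lam - g⁻¹) - (c / lam - g'⁻¹)| := by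
          rw [sub_self, abs_zero, max_comm 0 (c / lam - g⁻¹), max_comm 0 (c / lam - g'⁻¹)]
          exact max_le (abs_nonneg _) (abs_max_sub_max_le_abs _ _ _)
      _ = |g⁻¹ - g'⁻¹| := by rw [sub_sub_sub_cancel_left, abs_sub_comm]

theorem playerUtility_lt_playerUtility_bestResponse {c lam m g q : ℝ} (hc : 0 < c) (hg : 0 < g)
    (hlam : 0 ≤ lam) (hq : q ∈ Set.Icc 0 m) (hne : q ≠ bestResponse c lam m g) :
    playerUtility c lam g q < playerUtility c lam g (bestResponse c lam m g) := by
  set b := bestResponse c lam m g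
  have hb0 : 0 ≤ b := (bestResponse_mem_Icc g (hq.1.trans hq.2)).1
  have hq1 : 0 < 1 + g * q := by nlinarith [hq.1]
  have hb1 : 0 < 1 + g * b := by nlinarith
  -- first-order optimality condition at `b`
  have hfoc : (q - b) * (c * g / (1 + g * b) - lam) ≤ 0 := by
    rcases eq_or_lt_of_le hlam with rfl | hlam
    · have : b = m := if_pos rfl
      exact mul_nonpos_of_nonpos_of_nonneg (by linarith [hq.2]) (by rw [sub_zero]; positivity)
    · have hb' : b = min m (max 0 (c / lam - g⁻¹)) := if_neg hlam.ne'
      have : c * g / (1 + g * b) - lam = lam * g / (1 + g * b) * (c / lam - g⁻¹ - b) := by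
        field_simp
        ring
      rw [this, mul_left_comm]
      refine mul_nonpos_of_nonneg_of_nonpos (by positivity) ?_
      rw [hb']
      exact sub_mul_sub_min_max_nonpos hq
  have hlog : Real.log (1 + g * q) - Real.log (1 + g * b) < g * (q - b) / (1 + g * b) := by
    have hx : (1 + g * q) / (1 + g * b) ≠ 1 := by
      rw [Ne, div_eq_one_iff_eq hb1.ne']
      exact fun h => hne (mul_left_cancel₀ hg.ne' (by linarith))
    have := Real.log_lt_sub_one_of_pos (div_pos hq1 hb1) hx
    rw [Real.log_div hq1.ne' hb1.ne'] at this
    calc _ < (1 + g * q) / (1 + g * b) - 1 := this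
      _ = g * (q - b) / (1 + g * b) := by field_simp; ring
  have hkey : c * (g * (q - b) / (1 + g * b)) - lam * (q - b) =
      (q - b) * (c * g / (1 + g * b) - lam) := by ring
  unfold playerUtility
  linarith [mul_lt_mul_of_pos_left hlog hc]

section PowerGame

variable {M : ℕ} {W σ2 : ℝ} {α lam pmax : Fin M → ℝ} {a : Fin M → Fin M → ℝ}

theorem stratBox_eq_Icc : stratBox M pmax = Set.Icc 0 pmax := by
  ext p
  simp only [stratBox, Set.mem_ofPred_eq, Set.mem_Icc, Pi.le_def, Pi.zero_apply, forall_and]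

theorem inv_gain (p : Fin M → ℝ) (i : Fin M) :
    (gain M σ2 a p i)⁻¹ = ((∑ ℓ ∈ univ.erase i, a i ℓ * p ℓ) + σ2) / a i i :=
  inv_div _ _

theorem gain_pos (hσ2 : 0 < σ2) (ha : ∀ i ℓ, 0 ≤ a i ℓ) (haii : ∀ i, 0 < a i i)
    {p : Fin M → ℝ} (hp : 0 ≤ p) (i : Fin M) : 0 < gain M σ2 a p i :=
  div_pos (haii i) (add_pos_of_nonneg_of_pos
    (sum_nonneg fun ℓ _ => mul_nonneg (ha i ℓ) (hp ℓ)) hσ2)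

theorem gain_update_self (p : Fin M → ℝ) (i : Fin M) (q : ℝ) :
    gain M σ2 a (Function.update p i q) i = gain M σ2 a p i := by
  unfold gain
  congr 2
  exact sum_congr rfl fun ℓ hℓ => by rw [Function.update_of_ne (ne_of_mem_erase hℓ)]

theorem payoff_update_self (p : Fin M → ℝ) (i : Fin M) (q : ℝ) :
    payoff M W σ2 α lam a (Function.update p i q) i =
      playerUtility (α i * W) (lam i) (gain M σ2 a p i) q := by
  rw [payoff, gain_update_self, Function.update_self, playerUtility]

variable (W σ2 α lam pmax a) in
noncomputable def bestResponseMap (p : Fin M → ℝ) : Fin M → ℝ :=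
  fun i => bestResponse (α i * W) (lam i) (pmax i) (gain M σ2 a p i)

theorem bestResponseMap_mem_Icc (hpmax : 0 ≤ pmax) (p : Fin M → ℝ) :
    bestResponseMap W σ2 α lam pmax a p ∈ Set.Icc 0 pmax := by
  rw [← stratBox_eq_Icc]
  exact fun i => bestResponse_mem_Icc _ (hpmax i)

theorem antitone_bestResponseMap (ha : ∀ i ℓ, 0 ≤ a i ℓ) :
    Antitone (bestResponseMap W σ2 α lam pmax a) := by
  intro p p' hpp' i
  refine bestResponse_le_bestResponse ?_
  rw [inv_gain, inv_gain]
  gcongr with ℓ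
  · exact ha i i
  · exact ha i ℓ
  · exact hpp' ℓ

theorem mul_abs_bestResponseMap_sub_le (ha : ∀ i ℓ, 0 ≤ a i ℓ) (haii : ∀ i, 0 < a i i)
    (p p' : Fin M → ℝ) (i : Fin M) :
    a i i * |bestResponseMap W σ2 α lam pmax a p i - bestResponseMap W σ2 α lam pmax a p' i| ≤
      ∑ ℓ ∈ univ.erase i, a i ℓ * |p ℓ - p' ℓ| :=
  calc _ ≤ a i i * |(gain M σ2 a p i)⁻¹ - (gain M σ2 a p' i)⁻¹| :=
        mul_le_mul_of_nonneg_left (abs_bestResponse_sub_le _ _ _ _ _) (haii i).le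
    _ = |∑ ℓ ∈ univ.erase i, a i ℓ * (p ℓ - p' ℓ)| := by
        rw [inv_gain, inv_gain, ← sub_div, abs_div, abs_of_pos (haii i),
          mul_div_cancel₀ _ (haii i).ne']
        simp only [mul_sub, sum_sub_distrib, add_sub_add_right_eq_sub]
    _ ≤ ∑ ℓ ∈ univ.erase i, a i ℓ * |p ℓ - p' ℓ| := by
        refine (abs_sum_le_sum_abs _ _).trans_eq (sum_congr rfl fun ℓ _ => ?_)
        rw [abs_mul, abs_of_nonneg (ha i ℓ)]

theorem isNE_iff_bestResponseMap_eq (hW : 0 < W) (hσ2 : 0 < σ2) (hα : ∀ i, 0 < α i)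
    (hlam : ∀ i, 0 ≤ lam i) (ha : ∀ i ℓ, 0 ≤ a i ℓ) (haii : ∀ i, 0 < a i i)
    {p : Fin M → ℝ} (hp : p ∈ stratBox M pmax) :
    IsNE M W σ2 α lam pmax a p ↔ bestResponseMap W σ2 α lam pmax a p = p := by
  have hlt : ∀ i, ∀ q ∈ Set.Icc 0 (pmax i), q ≠ bestResponseMap W σ2 α lam pmax a p i →
      playerUtility (α i * W) (lam i) (gain M σ2 a p i) q <
        playerUtility (α i * W) (lam i) (gain M σ2 a p i) (bestResponseMap W σ2 α lam pmax a p i) :=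
    fun i _ hq hne => playerUtility_lt_playerUtility_bestResponse (mul_pos (hα i) hW)
      (gain_pos hσ2 ha haii (fun ℓ => (hp ℓ).1) i) (hlam i) hq hne
  have hpay : ∀ i, payoff M W σ2 α lam a p i =
      playerUtility (α i * W) (lam i) (gain M σ2 a p i) (p i) := fun i => by
    rw [← payoff_update_self, Function.update_eq_self]
  constructor
  · intro hNE
    funext i
    by_contra hne
    have := hNE i (bestResponseMap W σ2 α lam pmax a p i)
      (bestResponse_mem_Icc _ ((hp i).1.trans (hp i).2))
    rw [payoff_update_self, hpay] at this
    exact (hlt i (p i) (hp i) (Ne.symm hne)).not_ge this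
  · intro hfix i q hq
    rw [payoff_update_self, hpay]
    rcases eq_or_ne q (bestResponseMap W σ2 α lam pmax a p i) with rfl | hne
    · rw [congrFun hfix i]
    · exact (hlt i q hq hne).le.trans_eq (by rw [congrFun hfix i])

variable (σ2 pmax a) in
noncomputable def qmatWeight (q : Fin M) : ℝ :=
  1 + σ2⁻¹ * ∑ i, a q i * pmax i

theorem one_le_qmatWeight (hσ2 : 0 ≤ σ2) (hpmax : 0 ≤ pmax) (ha : ∀ i ℓ, 0 ≤ a i ℓ) (q : Fin M) :
    1 ≤ qmatWeight σ2 pmax a q :=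
  le_add_of_nonneg_right (mul_nonneg (inv_nonneg.2 hσ2)
    (sum_nonneg fun i _ => mul_nonneg (ha q i) (hpmax i)))

theorem Qmat_apply_of_ne {i j : Fin M} (h : i ≠ j) :
    Qmat M W σ2 α pmax a i j = -(α i * W * (a i j / a j j) * qmatWeight σ2 pmax a j) :=
  if_neg h

theorem isZMatrix_Qmat (hW : 0 ≤ W) (hσ2 : 0 ≤ σ2) (hα : ∀ i, 0 ≤ α i) (hpmax : 0 ≤ pmax)
    (ha : ∀ i ℓ, 0 ≤ a i ℓ) : IsZMatrix (Qmat M W σ2 α pmax a) := fun i j h => by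
  have := one_le_qmatWeight hσ2 hpmax ha j
  rw [Qmat_apply_of_ne h, neg_nonpos]
  exact mul_nonneg (mul_nonneg (mul_nonneg (hα i) hW) (div_nonneg (ha i j) (ha j j))) (by linarith)

theorem Qmat_mulVec_apply (haii : ∀ i, a i i ≠ 0) (hw : ∀ j, qmatWeight σ2 pmax a j ≠ 0)
    (d : Fin M → ℝ) (i : Fin M) :
    (Qmat M W σ2 α pmax a *ᵥ fun j => a j j * d j / qmatWeight σ2 pmax a j) i =
      α i * W * (a i i * d i / qmatWeight σ2 pmax a i - ∑ j ∈ univ.erase i, a i j * d j) := by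
  rw [mulVec, dotProduct, ← add_sum_erase _ _ (mem_univ i), mul_sub, mul_sum, sub_eq_add_neg,
    ← sum_neg_distrib]
  congr 1
  · rw [Qmat, if_pos rfl]
  · refine sum_congr rfl fun j hj => ?_
    rw [Qmat_apply_of_ne (ne_of_mem_erase hj).symm]
    field_simp [haii j, hw j]

theorem eq_of_forall_mul_abs_sub_le_sum (hQ : IsPMatrix (Qmat M W σ2 α pmax a)) (hW : 0 ≤ W)
    (hσ2 : 0 ≤ σ2) (hα : ∀ i, 0 ≤ α i) (hpmax : 0 ≤ pmax) (ha : ∀ i ℓ, 0 ≤ a i ℓ)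
    (haii : ∀ i, 0 < a i i) {p p' : Fin M → ℝ}
    (h : ∀ i, a i i * |p i - p' i| ≤ ∑ ℓ ∈ univ.erase i, a i ℓ * |p ℓ - p' ℓ|) : p = p' := by
  have hw := one_le_qmatWeight hσ2 hpmax ha
  have hw0 : ∀ j, 0 < qmatWeight σ2 pmax a j := fun j => one_pos.trans_le (hw j)
  set e : Fin M → ℝ := fun j => a j j * |p j - p' j| / qmatWeight σ2 pmax a j
  have he : e = 0 := by
    refine hQ.eq_zero_of_mulVec_nonpos (isZMatrix_Qmat hW hσ2 hα hpmax ha)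
      (fun j => div_nonneg (mul_nonneg (haii j).le (abs_nonneg _)) (hw0 j).le) fun i => ?_
    have hei : e i ≤ a i i * |p i - p' i| :=
      div_le_self (mul_nonneg (haii i).le (abs_nonneg _)) (hw i)
    rw [Qmat_mulVec_apply (fun i => (haii i).ne') (fun j => (hw0 j).ne'), Pi.zero_apply]
    exact mul_nonpos_of_nonneg_of_nonpos (mul_nonneg (hα i) hW) (by linarith [h i])
  funext i
  have := congrFun he i
  simp only [e, Pi.zero_apply, div_eq_zero_iff, mul_eq_zero, abs_eq_zero, sub_eq_zero,
    (haii i).ne', (hw0 i).ne', false_or, or_false] at this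
  exact this

end PowerGame

theorem unique_nash_equilibrium_of_isPMatrix_general (M : ℕ) (W σ2 : ℝ)
    (hW : 0 < W) (hσ2 : 0 < σ2) (α lam pmax : Fin M → ℝ)
    (a : Fin M → Fin M → ℝ)
    (hα : ∀ i, 0 < α i) (hlam : ∀ i, 0 ≤ lam i) (hpmax : ∀ i, 0 < pmax i)
    (ha : ∀ i ℓ, 0 ≤ a i ℓ) (haii : ∀ i, 0 < a i i)
    (hQ : IsPMatrix (Qmat M W σ2 α pmax a)) :
    ∃! pstar : Fin M → ℝ,
      pstar ∈ stratBox M pmax ∧ IsNE M W σ2 α lam pmax a pstar := by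
  set T := bestResponseMap W σ2 α lam pmax a
  have hpmax' : 0 ≤ pmax := fun i => (hpmax i).le
  have hsep : ∀ p p' : Fin M → ℝ,
      (∀ i, a i i * |p i - p' i| ≤ ∑ ℓ ∈ univ.erase i, a i ℓ * |p ℓ - p' ℓ|) → p = p' :=
    fun _ _ => eq_of_forall_mul_abs_sub_le_sum hQ hW.le hσ2.le (fun i => (hα i).le) hpmax' ha haii
  have hlip : ∀ p p' i, a i i * |T p i - T p' i| ≤ ∑ ℓ ∈ univ.erase i, a i ℓ * |p ℓ - p' ℓ| :=
    mul_abs_bestResponseMap_sub_le ha haii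
  have hT : Antitone T := antitone_bestResponseMap ha
  obtain ⟨u, hu, hTTu⟩ := (hT.comp hT).monotoneOn _ |>.exists_isFixedPt_of_mapsTo_Icc
    hpmax' fun x _ => bestResponseMap_mem_Icc hpmax' (T x)
  have hTu : T u = u := hsep _ _ fun i => by
    have hTTu : T (T u) = u := hTTu
    simpa only [hTTu, abs_sub_comm (u i)] using hlip (T u) u i
  have hu : u ∈ stratBox M pmax := stratBox_eq_Icc ▸ hu
  refine ⟨u, ⟨hu, (isNE_iff_bestResponseMap_eq hW hσ2 hα hlam ha haii hu).2 hTu⟩, ?_⟩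
  rintro p ⟨hp, hNE⟩
  have hTp : T p = p := (isNE_iff_bestResponseMap_eq hW hσ2 hα hlam ha haii hp).1 hNE
  exact hsep p u fun i => by simpa only [hTp, hTu] using hlip p u i

/-- **Theorem 1, uniqueness of the NE.** If `Q` is a P-matrix, then
the power allocation game admits exactly one Nash equilibrium. -/
theorem unique_nash_equilibrium_of_isPMatrix (M : ℕ) (hM : 1 ≤ M) (W σ2 : ℝ)
    (hW : 0 < W) (hσ2 : 0 < σ2) (α lam pmax : Fin M → ℝ)
    (a : Fin M → Fin M → ℝ)
    (hα : ∀ i, 0 < α i) (hlam : ∀ i, 0 ≤ lam i) (hpmax : ∀ i, 0 < pmax i)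
    (ha : ∀ i ℓ, 0 ≤ a i ℓ) (haii : ∀ i, 0 < a i i)
    (hQ : IsPMatrix (Qmat M W σ2 α pmax a)) :
    ∃! pstar : Fin M → ℝ,
      pstar ∈ stratBox M pmax ∧ IsNE M W σ2 α lam pmax a pstar :=
  unique_nash_equilibrium_of_isPMatrix_general M W σ2 hW hσ2 α lam pmax a hα hlam hpmax ha haii hQ
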